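/- Every subfield of a CM-field is either totally real or itself a CM-field. -/

import Mathlib

open NumberField

/-- A field is totally real if every complex embedding is real. -/
def IsTotallyRealField (K : Type*) [Field K] : Prop :=
  ∀ φ : K →+* ℂ, ComplexEmbedding.IsReal φ

/-- A field is totally imaginary if no complex embedding is real. -/
def IsTotallyImaginaryField (K : Type*) [Field K] : Prop :=
  ∀ φ : K →+* ℂ, ¬ ComplexEmbedding.IsReal φ

/-- A CM-field: a totally imaginary field which is a quadratic extension of a
totally real subfield. -/
def IsCMField (L : Type*) [Field L] : Prop :=
  IsTotallyImaginaryField L ∧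
    ∃ F : Subfield L, IsTotallyRealField F ∧ Module.finrank F L = 2

/-!
Complex conjugation `c` of the CM-field `L` satisfies `φ ∘ c = conj ∘ φ` for every complex
embedding `φ`. Hence two embeddings of `L` that agree on a subfield `K` also agree on `c x` for
`x ∈ K`, which by separability forces `c x ∈ K`. The restriction `σ` of `c` to `K` again satisfies
`ψ ∘ σ = conj ∘ ψ` for every embedding `ψ` of `K`. If `σ = 1` every embedding of `K` is real;
otherwise none is, and `K` is a quadratic extension of the fixed field of `σ`, which is totally
real because every embedding intertwines `σ` with complex conjugation.
-/

open ComplexEmbedding InfinitePlace Polynomial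
open scoped ComplexConjugate

theorem mem_range_algebraMap_of_forall_algHom_apply_eq {F E Ω : Type*} [Field F] [Field E]
    [Field Ω] [Algebra F E] [Algebra F Ω] [IsAlgClosed Ω] [Algebra.IsSeparable F E] {y : E}
    (h : ∀ f g : E →ₐ[F] Ω, f y = g y) : y ∈ (algebraMap F E).range := by
  have hint : IsIntegral F y := Algebra.IsSeparable.isIntegral F y
  by_contra hy
  have hcard : 1 < Fintype.card ((minpoly F y).rootSet Ω) := by
    rw [card_rootSet_eq_natDegree (Algebra.IsSeparable.isSeparable F y) (IsAlgClosed.splits _)]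
    exact (minpoly.two_le_natDegree_iff hint).mpr hy
  obtain ⟨⟨z₁, hz₁⟩, ⟨z₂, hz₂⟩, hne⟩ := Fintype.exists_pair_of_one_lt_card hcard
  have hsplits (s : E) : IsIntegral F s ∧ ((minpoly F s).map (algebraMap F Ω)).Splits :=
    ⟨Algebra.IsSeparable.isIntegral F s, IsAlgClosed.splits _⟩
  obtain ⟨f₁, hf₁⟩ :=
    IntermediateField.exists_algHom_of_splits_of_aeval hsplits (mem_rootSet.mp hz₁).2
  obtain ⟨f₂, hf₂⟩ :=
    IntermediateField.exists_algHom_of_splits_of_aeval hsplits (mem_rootSet.mp hz₂).2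
  exact hne (Subtype.ext (hf₁ ▸ hf₂ ▸ h f₁ f₂))

theorem isTotallyRealField_iff_isTotallyReal (K : Type*) [Field K] :
    IsTotallyRealField K ↔ IsTotallyReal K := by
  refine ⟨fun h ↦ ⟨fun w ↦ ?_⟩, fun _ φ ↦ IsTotallyReal.complexEmbedding_isReal φ⟩
  rw [← mk_embedding w]
  exact isReal_mk_iff.mpr (h _)

theorem isTotallyImaginaryField_iff_isTotallyComplex (K : Type*) [Field K] :
    IsTotallyImaginaryField K ↔ IsTotallyComplex K := by
  refine ⟨fun h ↦ ⟨fun w ↦ ?_⟩, fun _ φ ↦ IsTotallyComplex.complexEmbedding_not_isReal φ⟩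
  rw [← mk_embedding w]
  exact isComplex_mk_iff.mpr (h _)

theorem isCMField_iff_numberField_isCMField (K : Type*) [Field K] [NumberField K] :
    _root_.IsCMField K ↔ NumberField.IsCMField K := by
  simp only [_root_.IsCMField, isTotallyImaginaryField_iff_isTotallyComplex,
    isTotallyRealField_iff_isTotallyReal]
  constructor
  · rintro ⟨_, F, _, hF⟩
    have : Algebra.IsQuadraticExtension F K := ⟨hF⟩
    exact IsCMField.ofCMExtension F K
  · intro _
    exact ⟨inferInstance, maximalRealSubfield K, inferInstance,
      Algebra.IsQuadraticExtension.finrank_eq_two _ _⟩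

theorem isTotallyRealField_or_isCMField_of_forall_isConj (K : Type*) [Field K] [NumberField K]
    {σ : Gal(K/ℚ)} (hσ : ∀ φ : K →+* ℂ, IsConj φ σ) :
    IsTotallyRealField K ∨ _root_.IsCMField K := by
  by_cases hσ1 : σ = 1
  · subst hσ1
    exact Or.inl fun φ ↦ isConj_one_iff.mp (hσ φ)
  refine Or.inr ⟨fun φ ↦ (isConj_ne_one_iff (hσ φ)).mp hσ1,
    FixedPoints.subfield (Subgroup.zpowers σ) K, fun χ ↦ ?_, ?_⟩
  · rw [← lift_comp_algebraMap K χ]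
    exact (hσ _).isReal_comp (σ := IsGaloisGroup.mulEquivAlgEquiv (Subgroup.zpowers σ)
      (FixedPoints.subfield (Subgroup.zpowers σ) K) K ⟨σ, Subgroup.mem_zpowers σ⟩)
  · obtain ⟨φ⟩ : Nonempty (K →+* ℂ) := inferInstance
    rw [← IsGaloisGroup.card_eq_finrank (Subgroup.zpowers σ), Nat.card_zpowers,
      orderOf_isConj_two_of_ne_one (hσ φ) hσ1]

namespace NumberField.IsCMField

variable {L : Type*} [Field L] [NumberField L] [NumberField.IsCMField L]

theorem complexConj_mem {K : Subfield L} {x : L} (hx : x ∈ K) : complexConj L x ∈ K := by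
  obtain ⟨φ⟩ : Nonempty (L →+* ℂ) := inferInstance
  let _ : Algebra K ℂ := (φ.comp K.subtype).toAlgebra
  obtain ⟨y, hy⟩ := mem_range_algebraMap_of_forall_algHom_apply_eq (F := K) (Ω := ℂ)
    (y := complexConj L x) fun f g ↦ by
      simp only [← AlgHom.coe_toRingHom, complexEmbedding_complexConj]
      exact congrArg conj ((f.commutes ⟨x, hx⟩).trans (g.commutes ⟨x, hx⟩).symm)
  exact hy ▸ y.2

noncomputable def restrictComplexConj (K : Subfield L) : Gal(K/ℚ) :=
  RingEquiv.toRatAlgEquiv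
    { toFun x := ⟨complexConj L x, complexConj_mem x.2⟩
      invFun x := ⟨complexConj L x, complexConj_mem x.2⟩
      left_inv x := Subtype.ext (complexConj_apply_apply L x)
      right_inv x := Subtype.ext (complexConj_apply_apply L x)
      map_mul' _ _ := Subtype.ext (map_mul _ _ _)
      map_add' _ _ := Subtype.ext (map_add _ _ _) }

theorem isConj_restrictComplexConj {K : Subfield L} (ψ : K →+* ℂ) :
    IsConj ψ (restrictComplexConj K) := by
  ext x
  rw [← lift_comp_algebraMap L ψ]
  exact (complexEmbedding_complexConj L (lift L ψ) x).symm

end NumberField.IsCMField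

/-- Every subfield of a CM-field is either totally real or itself a CM-field. -/
theorem subfield_totallyReal_or_isCMField (L : Type*) [Field L] [NumberField L]
    (h : _root_.IsCMField L) (K : Subfield L) :
    IsTotallyRealField K ∨ _root_.IsCMField K := by
  have := (isCMField_iff_numberField_isCMField L).mp h
  exact isTotallyRealField_or_isCMField_of_forall_isConj K
    IsCMField.isConj_restrictComplexConj
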